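/- arXiv:1804.02802 — 2 statements merged into one kernel-verified Lean document; each statement's English description precedes it below -/
import Mathlib

section
/- Every finite connected simple graph satisfying property (P1) also satisfies property (P2). -/
open SimpleGraph

/-- The closed neighborhood `N[v]` of a vertex. -/
def cNbr {V : Type} (G : SimpleGraph V) (v : V) : Set V := insert v (G.neighborSet v)

/-- `N(c,x)`: the neighbors of `c` lying on a shortest path from `c` to `x`. -/
def stepSet {V : Type} (G : SimpleGraph V) (c x : V) : Set V :=
  {v | G.Adj c v ∧ G.dist c x = 1 + G.dist v x}

/-- Property (P1): the four-point condition. -/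
def P1 {V : Type} (G : SimpleGraph V) : Prop :=
  ∀ c c' x y : V,
    (G.dist c c' + G.dist x y ≤ G.dist c x + G.dist c' y ∧
      G.dist c x + G.dist c' y = G.dist c y + G.dist c' x) ∨
    (G.dist c x + G.dist c' y ≤ G.dist c c' + G.dist x y ∧
      G.dist c c' + G.dist x y = G.dist c y + G.dist c' x) ∨
    (G.dist c y + G.dist c' x ≤ G.dist c c' + G.dist x y ∧
      G.dist c c' + G.dist x y = G.dist c x + G.dist c' y)

/-- Property (P2). -/
def P2 {V : Type} (G : SimpleGraph V) : Prop :=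
  ∀ c x : V, 2 ≤ G.dist c x → ∀ c' ∈ stepSet G c x, ∀ y : V, 2 ≤ G.dist c' y →
    G.dist c y = G.dist c c' + G.dist c' y ∨ G.dist x y = G.dist x c' + G.dist c' y

/-- A (P3)-witness for `G`. -/
def P3Witness {V : Type} (G : SimpleGraph V) (S : Set V) : Prop :=
  (∀ v : V, v ∈ S ∨ ∃ s ∈ S, G.Adj v s) ∧
  ∀ c ∈ S, ∀ x : V, 2 ≤ G.dist c x →
    ∃ c' ∈ stepSet G c x ∩ S, ∀ y : V, 2 ≤ G.dist c' y →
      G.dist c y = G.dist c c' + G.dist c' y ∨ G.dist x y = G.dist x c' + G.dist c' y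

/-- Property (P3). -/
def P3 {V : Type} (G : SimpleGraph V) : Prop := ∃ S : Set V, P3Witness G S

/-- `C(c,x)` relative to a set `S`. -/
def CSet {V : Type} (G : SimpleGraph V) (S : Set V) (c x : V) : Set V :=
  {u | u ∈ stepSet G c x ∩ S ∧ ∀ v ∈ stepSet G c x, cNbr G v ⊆ cNbr G u}

/-- A cut vertex of a connected graph: its removal disconnects the graph. -/
def IsCutVertex {V : Type} (G : SimpleGraph V) (v : V) : Prop :=
  G.Connected ∧ ¬ (G.induce {u | u ≠ v}).Connected

/-- A set of vertices inducing a connected subgraph with no cut vertex of its own. -/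
def NoCutSet {V : Type} (G : SimpleGraph V) (B : Set V) : Prop :=
  (G.induce B).Connected ∧ ∀ v : B, ¬ IsCutVertex (G.induce B) v

/-- A block of `G`: a maximal connected subgraph having no cut vertex of its own. -/
def IsBlock {V : Type} (G : SimpleGraph V) (B : Set V) : Prop :=
  NoCutSet G B ∧ ∀ B' : Set V, B ⊆ B' → NoCutSet G B' → B = B'

/-- A block graph: a connected graph in which every block is complete. -/
def IsBlockGraph {V : Type} (G : SimpleGraph V) : Prop :=
  G.Connected ∧ ∀ B : Set V, IsBlock G B → ∀ u v, u ∈ B → v ∈ B → u ≠ v → G.Adj u v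

/-- The blow-up of a graph `H` by multiplicities `n`. -/
def blowup {W : Type} (H : SimpleGraph W) (n : W → ℕ) :
    SimpleGraph {p : W × ℕ // p.2 < n p.1} where
  Adj p q := p.val ≠ q.val ∧ (p.val.1 = q.val.1 ∨ H.Adj p.val.1 q.val.1)
  symm := by
    refine ⟨?_⟩
    rintro p q ⟨h1, h2 | h2⟩
    · exact ⟨fun h => h1 h.symm, Or.inl h2.symm⟩
    · exact ⟨fun h => h1 h.symm, Or.inr h2.symm⟩
  loopless := by refine ⟨?_⟩; rintro p ⟨h1, -⟩; exact h1 rfl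

/-- An extended block graph: a graph isomorphic to the blow-up of the cut vertices of a
finite block graph. -/
def IsExtendedBlockGraph {V : Type} (G : SimpleGraph V) : Prop :=
  ∃ (W : Type) (_ : Finite W) (H : SimpleGraph W) (n : W → ℕ),
    IsBlockGraph H ∧ (∀ v, 1 ≤ n v) ∧ (∀ v, ¬ IsCutVertex H v → n v = 1) ∧
    Nonempty (G ≃g blowup H n)

/-- `B` is a backbone of `G`. -/
def IsBackbone {V : Type} (G : SimpleGraph V) (B : Set V) : Prop :=
  IsExtendedBlockGraph (G.induce B) ∧
  ∀ c ∈ B, ∀ x : V, 2 ≤ G.dist c x →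
    ∃ c' ∈ stepSet G c x ∩ B, ∀ v ∈ stepSet G c x, cNbr G v ⊆ cNbr G c'

/-- A vertebrate graph: a connected graph with a backbone. -/
def IsVertebrateGraph {V : Type} (G : SimpleGraph V) : Prop :=
  G.Connected ∧ ∃ B : Set V, IsBackbone G B

theorem P1.dist_add_dist_le_max {V : Type} {G : SimpleGraph V} (h : P1 G) (c c' x y : V) :
    G.dist c x + G.dist c' y ≤ max (G.dist c c' + G.dist x y) (G.dist c y + G.dist c' x) := by
  rcases h c c' x y with ⟨-, h⟩ | ⟨h, -⟩ | ⟨-, h⟩ <;> omega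

theorem P2_of_P1_general {V : Type} (G : SimpleGraph V)
    (hG : G.Connected) (hP1 : P1 G) : P2 G := by
  intro c x _ c' ⟨hadj, hstep⟩ y _
  by_contra! h
  have hcc' : G.dist c c' = 1 := dist_eq_one_iff_adj.mpr hadj
  have hcy : G.dist c y < G.dist c c' + G.dist c' y := hG.dist_triangle.lt_of_ne h.1
  have hxy : G.dist x y < G.dist x c' + G.dist c' y := hG.dist_triangle.lt_of_ne h.2
  have hc'x : G.dist c' x = G.dist x c' := dist_comm
  have : max (G.dist c c' + G.dist x y) (G.dist c y + G.dist c' x) < G.dist c x + G.dist c' y :=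
    max_lt (by omega) (by omega)
  exact this.not_ge (hP1.dist_add_dist_le_max c c' x y)

/-- Every finite connected simple graph satisfying (P1) also satisfies (P2). -/
theorem P2_of_P1 {V : Type} [Fintype V] (G : SimpleGraph V)
    (hG : G.Connected) (hP1 : P1 G) : P2 G :=
  P2_of_P1_general G hG hP1
end

section
/- Let G be a finite connected simple graph satisfying property (P2), and define C(c,x) relative to S = V(G). If c1, c2 ∈ V(G) satisfy N[c1] ⊆ N[c2] and c1 ∈ N(c,x) for some vertices c, x with d(c,x) ≥ 2, then c2 ∈ C(c,x). -/
open SimpleGraph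

/-
The key point is that, under (P2), all vertices of `N(c,x)` have the same closed neighborhood:
if `v, c' ∈ N(c,x)` and some `w ∈ N[v]` had `d(c',w) ≥ 2`, then (P2) would give either
`d(c,w) = 1 + d(c',w) ≥ 3` or `d(x,w) = d(x,c') + d(c',w) ≥ d(c,x) + 1`, while `w` is within
distance `2` of `c` and within distance `d(c,x)` of `x` through `v`. Moreover `N[c1] ⊆ N[c2]`
forces `d(c2,y) ≤ d(c1,y)` for `y ≠ c1`, which places `c2` in `N(c,x)` together with `c1`.
-/

namespace SimpleGraph

variable {V : Type} {G : SimpleGraph V}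

theorem Connected.mem_cNbr_iff_dist_le_one (hG : G.Connected) {v w : V} :
    w ∈ cNbr G v ↔ G.dist v w ≤ 1 := by
  rw [cNbr, Set.mem_insert_iff, mem_neighborSet, ← dist_eq_one_iff_adj, eq_comm,
    ← hG.dist_eq_zero_iff]
  omega

theorem Connected.dist_le_of_cNbr_subset (hG : G.Connected) {a b x : V}
    (hab : cNbr G a ⊆ cNbr G b) (hax : a ≠ x) : G.dist b x ≤ G.dist a x := by
  obtain ⟨p, hp⟩ := hG.exists_walk_length_eq_dist a x
  cases p with
  | nil => exact absurd rfl hax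
  | @cons _ w _ haw q =>
    have hbw : G.dist b w ≤ 1 := hG.mem_cNbr_iff_dist_le_one.1 (hab (Or.inr haw))
    calc G.dist b x ≤ G.dist b w + G.dist w x := hG.dist_triangle
      _ ≤ 1 + q.length := add_le_add hbw (dist_le q)
      _ = G.dist a x := by rw [← hp, Walk.length_cons, add_comm]

theorem Connected.mem_stepSet_of_cNbr_subset (hG : G.Connected) {c x c1 c2 : V}
    (hcx : 2 ≤ G.dist c x) (h1 : c1 ∈ stepSet G c x) (h12 : cNbr G c1 ⊆ cNbr G c2) :
    c2 ∈ stepSet G c x := by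
  obtain ⟨hcc1, hc1x⟩ := h1
  have hc1_ne_x : c1 ≠ x := by rintro rfl; rw [dist_self] at hc1x; omega
  have hc2x : G.dist c2 x ≤ G.dist c1 x := hG.dist_le_of_cNbr_subset h12 hc1_ne_x
  have hcc2_le : G.dist c c2 ≤ 1 := by
    rw [dist_comm]
    exact hG.mem_cNbr_iff_dist_le_one.1 (h12 (Or.inr hcc1.symm))
  have hcx_le : G.dist c x ≤ G.dist c c2 + G.dist c2 x := hG.dist_triangle
  have hcc2 : G.dist c c2 = 1 := by omega
  exact ⟨dist_eq_one_iff_adj.1 hcc2, by omega⟩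

theorem Connected.cNbr_subset_of_mem_stepSet (hG : G.Connected) (hP2 : P2 G) {c x v c' : V}
    (hcx : 2 ≤ G.dist c x) (hv : v ∈ stepSet G c x) (hc' : c' ∈ stepSet G c x) :
    cNbr G v ⊆ cNbr G c' := by
  intro w hw
  rw [hG.mem_cNbr_iff_dist_le_one] at hw ⊢
  by_contra! hc'w
  obtain ⟨hcv, hvx⟩ := hv
  have hcw : G.dist c w ≤ 2 := calc
    G.dist c w ≤ G.dist c v + G.dist v w := hG.dist_triangle
    _ ≤ 2 := by rw [dist_eq_one_iff_adj.2 hcv]; omega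
  have hxw : G.dist x w ≤ G.dist c x := calc
    G.dist x w ≤ G.dist x v + G.dist v w := hG.dist_triangle
    _ ≤ G.dist c x := by rw [dist_comm, hvx]; omega
  rcases hP2 c x hcx c' hc' w hc'w with hw' | hw'
  · rw [dist_eq_one_iff_adj.2 hc'.1] at hw'
    omega
  · rw [dist_comm (u := x) (v := c')] at hw'
    have hc'x := hc'.2
    omega

end SimpleGraph

theorem mem_CSet_univ_of_cNbr_subset_general {V : Type} (G : SimpleGraph V)
    (hG : G.Connected) (hP2 : P2 G)
    (c1 c2 : V) (h12 : cNbr G c1 ⊆ cNbr G c2)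
    (c x : V) (hcx : 2 ≤ G.dist c x) (h1 : c1 ∈ stepSet G c x) :
    c2 ∈ CSet G Set.univ c x :=
  ⟨⟨hG.mem_stepSet_of_cNbr_subset hcx h1 h12, trivial⟩,
    fun _ hv => (hG.cNbr_subset_of_mem_stepSet hP2 hcx hv h1).trans h12⟩

/-- Under (P2) (with `C(c,x)` taken relative to `S = V(G)`), if
`N[c1] ⊆ N[c2]` and `c1 ∈ N(c,x)`, then `c2 ∈ C(c,x)`. -/
theorem mem_CSet_univ_of_cNbr_subset {V : Type} [Fintype V] (G : SimpleGraph V)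
    (hG : G.Connected) (hP2 : P2 G)
    (c1 c2 : V) (h12 : cNbr G c1 ⊆ cNbr G c2)
    (c x : V) (hcx : 2 ≤ G.dist c x) (h1 : c1 ∈ stepSet G c x) :
    c2 ∈ CSet G Set.univ c x :=
  mem_CSet_univ_of_cNbr_subset_general G hG hP2 c1 c2 h12 c x hcx h1
end
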